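/- arXiv:2209.09181 — 6 statements merged into one kernel-verified Lean document; each statement's English description precedes it below -/
import Mathlib

section
/- The 4×4 matrix g|_{Σ_τ} with entries g₁₁ = 1+μ/Σ, g₂₂ = Σ, g₃₃ = (r²+a²)sin²θ + a²sin⁴θ·μ/Σ, g₄₄ = (r²+b²)cos²θ + b²cos⁴θ·μ/Σ, g₁₃ = g₃₁ = −a sin²θ(1+μ/Σ), g₁₄ = g₄₁ = −b cos²θ(1+μ/Σ), g₃₄ = g₄₃ = ab sin²θ cos²θ·μ/Σ, and all other entries zero, is positive definite; in particular its four leading principal minors equal 1+μ/Σ, Σ+μ, (Σ+μ)(r²+a²cos²θ)sin²θ, and r²Σ(Σ+μ)sin²θcos²θ respectively, all of which are positive. -/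
/-!
The quadratic form of the slice metric admits an explicit LDLᵀ (Cholesky-type) factorisation
`g = Pᴴ D P`, with `P` upper unitriangular and
`D = diag(1 + μ/Σ, Σ, sin²θ (r² + a² cos²θ), cos²θ r² Σ / (r² + a² cos²θ))`:
complete the square in the first coordinate, then in the third. The pivots are positive, so `g`
is positive definite, and `det g` is their product. The smaller leading minors are computed
directly.
-/

open Matrix

namespace MyersPerry

noncomputable section

-- `s` and `c` play the roles of `sin²θ` and `cos²θ`.
def sliceMetric (a b r μ S s c : ℝ) : Matrix (Fin 4) (Fin 4) ℝ :=
  !![1 + μ/S, 0, -a*s*(1 + μ/S), -b*c*(1 + μ/S);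
     0, S, 0, 0;
     -a*s*(1 + μ/S), 0, (r^2+a^2)*s + a^2*s^2*(μ/S), a*b*s*c*(μ/S);
     -b*c*(1 + μ/S), 0, a*b*s*c*(μ/S), (r^2+b^2)*c + b^2*c^2*(μ/S)]

def sliceFactor (a b r s c : ℝ) : Matrix (Fin 4) (Fin 4) ℝ :=
  !![1, 0, -a*s, -b*c;
     0, 1, 0, 0;
     0, 0, 1, -a*b*c/(r^2 + a^2*c);
     0, 0, 0, 1]

def slicePivots (a r μ S s c : ℝ) : Fin 4 → ℝ :=
  ![1 + μ/S, S, s*(r^2 + a^2*c), c*r^2*S/(r^2 + a^2*c)]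

end

theorem det_sliceFactor (a b r s c : ℝ) : (sliceFactor a b r s c).det = 1 := by
  rw [det_of_isUpperTriangular]
  · simp [sliceFactor, Fin.prod_univ_four]
  · intro i j hij
    fin_cases i <;> fin_cases j <;> simp_all [sliceFactor]

variable {a b r μ S s c : ℝ}

theorem sliceMetric_eq_conjTranspose_mul_diagonal_mul (hsc : s + c = 1)
    (hS : S = r^2 + a^2*c + b^2*s) (hA : r^2 + a^2*c ≠ 0) :
    sliceMetric a b r μ S s c =
      (sliceFactor a b r s c)ᴴ * diagonal (slicePivots a r μ S s c) * sliceFactor a b r s c := by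
  subst hS
  -- the form in which `field_simp` looks for the denominator of `sliceFactor`
  have hA' : r^2 + c*a^2 ≠ 0 := by rwa [mul_comm c]
  ext i j
  fin_cases i <;> fin_cases j <;>
    simp [sliceMetric, sliceFactor, slicePivots, Matrix.mul_apply, Fin.sum_univ_four] <;>
    field_simp <;> obtain rfl : c = 1 - s := by linarith
  all_goals ring

theorem posDef_sliceMetric (hsc : s + c = 1) (hS : S = r^2 + a^2*c + b^2*s) (hμ : 0 ≤ μ)
    (hr : r ≠ 0) (hs : 0 < s) (hc : 0 < c) : (sliceMetric a b r μ S s c).PosDef := by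
  have hA : 0 < r^2 + a^2*c := by positivity
  have hS0 : 0 < S := by rw [hS]; positivity
  rw [sliceMetric_eq_conjTranspose_mul_diagonal_mul hsc hS hA.ne']
  refine PosDef.conjTranspose_mul_mul_same ?_ ?_
  · rw [posDef_diagonal_iff]
    intro i
    fin_cases i <;> simp [slicePivots] <;> positivity
  · rw [mulVec_injective_iff_isUnit, isUnit_iff_isUnit_det, det_sliceFactor]
    exact isUnit_one

theorem det_sliceMetric (hsc : s + c = 1) (hS : S = r^2 + a^2*c + b^2*s) (hS0 : S ≠ 0)
    (hA : r^2 + a^2*c ≠ 0) : (sliceMetric a b r μ S s c).det = r^2*S*(S + μ)*s*c := by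
  rw [sliceMetric_eq_conjTranspose_mul_diagonal_mul hsc hS hA, det_mul, det_mul,
    det_conjTranspose, det_sliceFactor, det_diagonal, Fin.prod_univ_four]
  simp [slicePivots]
  field_simp

theorem det_sliceMetric_leading_two (hS0 : S ≠ 0) :
    let g := sliceMetric a b r μ S s c
    (!![g 0 0, g 0 1; g 1 0, g 1 1]).det = S + μ := by
  simp [sliceMetric, det_fin_two]
  field_simp

theorem det_sliceMetric_leading_three (hsc : s + c = 1) (hS0 : S ≠ 0) :
    let g := sliceMetric a b r μ S s c
    (!![g 0 0, g 0 1, g 0 2; g 1 0, g 1 1, g 1 2; g 2 0, g 2 1, g 2 2]).det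
      = (S + μ)*(r^2 + a^2*c)*s := by
  obtain rfl : c = 1 - s := by linarith
  simp [sliceMetric, det_fin_three]
  field_simp
  ring

end MyersPerry

open Real MyersPerry in
/-- The induced spatial metric on constant-τ slices of the 5D Myers-Perry geometry in
Eddington–Finkelstein-type coordinates is positive definite; its four leading principal
minors equal 1+μ/S, Σ+μ, (Σ+μ)(r²+a²cos²θ)sin²θ and r²Σ(Σ+μ)sin²θcos²θ, all positive. -/
theorem stmt4 (a b r μ θ : ℝ) (hr : 0 < r) (hμ : 0 < μ)
    (hθ1 : 0 < θ) (hθ2 : θ < Real.pi/2)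
    (S : ℝ) (hS : S = r^2 + a^2*(Real.cos θ)^2 + b^2*(Real.sin θ)^2)
    (g : Matrix (Fin 4) (Fin 4) ℝ)
    (hg : g = !![1 + μ/S, 0, -a*(Real.sin θ)^2*(1 + μ/S), -b*(Real.cos θ)^2*(1 + μ/S);
                 0, S, 0, 0;
                 -a*(Real.sin θ)^2*(1 + μ/S), 0,
                   (r^2+a^2)*(Real.sin θ)^2 + a^2*(Real.sin θ)^4*(μ/S),
                   a*b*(Real.sin θ)^2*(Real.cos θ)^2*(μ/S);
                 -b*(Real.cos θ)^2*(1 + μ/S), 0,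
                   a*b*(Real.sin θ)^2*(Real.cos θ)^2*(μ/S),
                   (r^2+b^2)*(Real.cos θ)^2 + b^2*(Real.cos θ)^4*(μ/S)]) :
    g.PosDef ∧
    (!![g 0 0]).det = 1 + μ/S ∧
    (!![g 0 0, g 0 1; g 1 0, g 1 1]).det = S + μ ∧
    (!![g 0 0, g 0 1, g 0 2; g 1 0, g 1 1, g 1 2; g 2 0, g 2 1, g 2 2]).det
      = (S + μ)*(r^2 + a^2*(Real.cos θ)^2)*(Real.sin θ)^2 ∧
    g.det = r^2*S*(S + μ)*(Real.sin θ)^2*(Real.cos θ)^2 ∧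
    0 < 1 + μ/S ∧ 0 < S + μ ∧
    0 < (S + μ)*(r^2 + a^2*(Real.cos θ)^2)*(Real.sin θ)^2 ∧
    0 < r^2*S*(S + μ)*(Real.sin θ)^2*(Real.cos θ)^2 := by
  have hsin : 0 < sin θ := sin_pos_of_pos_of_lt_pi hθ1 (by linarith [pi_pos])
  have hcos : 0 < cos θ := cos_pos_of_mem_Ioo ⟨by linarith [pi_pos], hθ2⟩
  have hsc : sin θ ^ 2 + cos θ ^ 2 = 1 := sin_sq_add_cos_sq θ
  have hS0 : 0 < S := by rw [hS]; positivity
  have hA : 0 < r^2 + a^2*cos θ^2 := by positivity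
  obtain rfl : g = sliceMetric a b r μ S (sin θ ^ 2) (cos θ ^ 2) := by
    rw [hg, sliceMetric, ← pow_mul, ← pow_mul]
  exact ⟨posDef_sliceMetric hsc hS hμ.le hr.ne' (by positivity) (by positivity),
    by simp [sliceMetric], det_sliceMetric_leading_two hS0.ne',
    det_sliceMetric_leading_three hsc hS0.ne', det_sliceMetric hsc hS hS0.ne' hA.ne',
    by positivity, by positivity, by positivity, by positivity⟩
end

section
/- The determinant of the 4×4 matrix g|_{Σ_τ} (the induced spatial metric of the 5D Myers-Perry metric on constant-τ slices) equals r²Σ(Σ+μ)sin²θcos²θ. -/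
/-!
At `μ = 0` the slice metric `h` is flat space in spheroidal coordinates, and the Myers–Perry
slice metric is its Kerr–Schild deformation `h + (μ/Σ) ℓ ℓᵀ`, where `ℓ` happens to be the
first column of `h`. Hence `g = h (1 + (μ/Σ) e₀ ℓᵀ)`, and the matrix determinant lemma
gives `det g = det h · (1 + μ/Σ)`. Expanding `det h` along the row of `Σ` leaves a `3 × 3`
determinant equal to `r² Σ sin²θ cos²θ`, by `sin²θ + cos²θ = 1`.
-/

open Matrix

theorem Matrix.det_add_vecMulVec_col {n R : Type*} [Fintype n] [DecidableEq n] [CommRing R]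
    (A : Matrix n n R) (i : n) (w : n → R) :
    (A + vecMulVec (A.col i) w).det = A.det * (1 + w i) := by
  have hfactor : A + vecMulVec (A.col i) w = A * (1 + vecMulVec (Pi.single i 1) w) := by
    rw [Matrix.mul_add, Matrix.mul_one, mul_vecMulVec, mulVec_single_one]
  rw [hfactor, det_mul, vecMulVec_eq Unit, det_one_add_replicateCol_mul_replicateRow,
    dotProduct_single_one]

def flatSliceMetric (a b r s c S : ℝ) : Matrix (Fin 4) (Fin 4) ℝ :=
  !![1, 0, -a*s^2, -b*c^2;
     0, S, 0, 0;
     -a*s^2, 0, (r^2+a^2)*s^2, 0;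
     -b*c^2, 0, 0, (r^2+b^2)*c^2]

theorem det_flatSliceMetric {a b r s c S : ℝ} (hsc : s^2 + c^2 = 1)
    (hS : S = r^2 + a^2*c^2 + b^2*s^2) :
    (flatSliceMetric a b r s c S).det = r^2 * S^2 * s^2 * c^2 := by
  subst hS
  simp [flatSliceMetric, det_succ_row_zero, Fin.sum_univ_succ, Fin.succAbove]
  linear_combination
    (-(r^2 + a^2*c^2 + b^2*s^2) * s^2 * c^2 * (r^2*a^2 + r^2*b^2 + a^2*b^2)) * hsc

theorem stmt5_general (a b r μ θ : ℝ)
    (S : ℝ) (hS : S = r^2 + a^2*(Real.cos θ)^2 + b^2*(Real.sin θ)^2)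
    (g : Matrix (Fin 4) (Fin 4) ℝ)
    (hg : g = !![1 + μ/S, 0, -a*(Real.sin θ)^2*(1 + μ/S), -b*(Real.cos θ)^2*(1 + μ/S);
                 0, S, 0, 0;
                 -a*(Real.sin θ)^2*(1 + μ/S), 0,
                   (r^2+a^2)*(Real.sin θ)^2 + a^2*(Real.sin θ)^4*(μ/S),
                   a*b*(Real.sin θ)^2*(Real.cos θ)^2*(μ/S);
                 -b*(Real.cos θ)^2*(1 + μ/S), 0,
                   a*b*(Real.sin θ)^2*(Real.cos θ)^2*(μ/S),
                   (r^2+b^2)*(Real.cos θ)^2 + b^2*(Real.cos θ)^4*(μ/S)]) :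
    g.det = r^2*S*(S + μ)*(Real.sin θ)^2*(Real.cos θ)^2 := by
  set h := flatSliceMetric a b r (Real.sin θ) (Real.cos θ) S
  have hKerrSchild : g = h + vecMulVec (h.col 0) ((μ / S) • h.col 0) := by
    subst hg
    ext i j
    fin_cases i <;> fin_cases j <;> simp [h, flatSliceMetric, vecMulVec] <;> ring
  rw [hKerrSchild, det_add_vecMulVec_col, det_flatSliceMetric (Real.sin_sq_add_cos_sq θ) hS,
    Pi.smul_apply, col_apply, show h 0 0 = 1 from rfl, smul_eq_mul, mul_one]
  rcases eq_or_ne S 0 with rfl | hS0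
  · simp -- here `μ / 0 = 0`, and both sides vanish
  · field_simp

/-- The determinant of the induced spatial metric of the 5D Myers-Perry metric on
constant-τ slices equals r²Σ(Σ+μ)sin²θcos²θ. -/
theorem stmt5 (a b r μ θ : ℝ) (hr : 0 < r) (hμ : 0 < μ)
    (hθ1 : 0 < θ) (hθ2 : θ < Real.pi/2)
    (S : ℝ) (hS : S = r^2 + a^2*(Real.cos θ)^2 + b^2*(Real.sin θ)^2)
    (g : Matrix (Fin 4) (Fin 4) ℝ)
    (hg : g = !![1 + μ/S, 0, -a*(Real.sin θ)^2*(1 + μ/S), -b*(Real.cos θ)^2*(1 + μ/S);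
                 0, S, 0, 0;
                 -a*(Real.sin θ)^2*(1 + μ/S), 0,
                   (r^2+a^2)*(Real.sin θ)^2 + a^2*(Real.sin θ)^4*(μ/S),
                   a*b*(Real.sin θ)^2*(Real.cos θ)^2*(μ/S);
                 -b*(Real.cos θ)^2*(1 + μ/S), 0,
                   a*b*(Real.sin θ)^2*(Real.cos θ)^2*(μ/S),
                   (r^2+b^2)*(Real.cos θ)^2 + b^2*(Real.cos θ)^4*(μ/S)]) :
    g.det = r^2*S*(S + μ)*(Real.sin θ)^2*(Real.cos θ)^2 :=
  stmt5_general a b r μ θ S hS g hg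
end

section
/- Let P = γ⁰·c₊ + γ¹·c₋ + γ³·s + (γ⁵/p − i/r)·ab, where c± = Δ/(2r₊³) + 2Mr²/r₊³ ± r₊³/(2r²) and s = sinθcosθ(a²−b²)/p. Then P is invertible and P⁻¹ = (−1/(Σ+2M))·(γ⁰c₊ + γ¹c₋ + γ³s + (γ⁵/p + i/r)ab), i.e. P·(γ⁰c₊ + γ¹c₋ + γ³s + (γ⁵/p + i/r)ab) = −(Σ+2M)·I₄. -/
/-!
Write `P = X - t` and `Q = X + t` with `X = c₊γ⁰ + c₋γ¹ + sγ³ + (ab/p)γ⁵` and the central scalar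
`t = i ab/r`. The Clifford relations make all cross terms of `X²` cancel, so
`PQ = X² - t² = (-c₊² + c₋² + s² + a²b²/p² + a²b²/r²)·I`. The angular part `s² + a²b²/p²`
collapses to `a² + b² - p²` by the definition of `p`, and `c₋² - c₊² = -(Δ + 4Mr²)/r²`; together
the scalar is `-(Σ + 2M)`, which is nonzero since `Σ, M > 0`.
-/

section Clifford

variable {ι R A : Type*} [CommSemiring R] [Ring A] [Algebra R A]

theorem sum_smul_mul_self_of_anticomm (γ : ι → A) (η c : ι → R)
    (hsq : ∀ i, γ i * γ i = η i • 1) (hanti : ∀ i j, i ≠ j → γ i * γ j + γ j * γ i = 0)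
    (s : Finset ι) :
    (∑ i ∈ s, c i • γ i) * (∑ i ∈ s, c i • γ i) = (∑ i ∈ s, c i ^ 2 * η i) • 1 := by
  classical
  induction s using Finset.induction_on with
  | empty => simp
  | insert a s ha ih =>
    have hcross : γ a * (∑ i ∈ s, c i • γ i) + (∑ i ∈ s, c i • γ i) * γ a = 0 := by
      rw [Finset.mul_sum, Finset.sum_mul, ← Finset.sum_add_distrib]
      refine Finset.sum_eq_zero fun i hi => ?_
      rw [mul_smul_comm, smul_mul_assoc, ← smul_add, hanti a i (ne_of_mem_of_not_mem hi ha).symm,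
        smul_zero]
    rw [Finset.sum_insert ha, Finset.sum_insert ha, add_smul, ← ih]
    calc (c a • γ a + ∑ i ∈ s, c i • γ i) * (c a • γ a + ∑ i ∈ s, c i • γ i)
        = (c a * c a) • (γ a * γ a)
          + c a • (γ a * (∑ i ∈ s, c i • γ i) + (∑ i ∈ s, c i • γ i) * γ a)
          + (∑ i ∈ s, c i • γ i) * (∑ i ∈ s, c i • γ i) := by
          simp only [add_mul, mul_add, smul_mul_assoc, mul_smul_comm, smul_smul, smul_add]
          abel
      _ = (c a ^ 2 * η a) • 1 + (∑ i ∈ s, c i • γ i) * (∑ i ∈ s, c i • γ i) := by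
          rw [hcross, hsq, smul_zero, add_zero, smul_smul, sq]

end Clifford

theorem mul_self_eq_smul_one_of_add_self {K A : Type*} [Field K] [NeZero (2 : K)] [Ring A]
    [Algebra K A] {x : A} {η : K} (h : x * x + x * x = (2 * η) • 1) : x * x = η • 1 := by
  have h2 : (2 : K) ≠ 0 := two_ne_zero
  calc x * x = (2⁻¹ * 2 : K) • (x * x) := by rw [inv_mul_cancel₀ h2, one_smul]
    _ = η • 1 := by rw [mul_smul, two_smul, h, smul_smul, ← mul_assoc, inv_mul_cancel₀ h2, one_mul]

theorem sub_smul_one_mul_add_smul_one {R A : Type*} [CommRing R] [Ring A] [Algebra R A]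
    (x : A) (t : R) : (x - t • 1) * (x + t • 1) = x * x - t ^ 2 • 1 := by
  simp only [sub_mul, mul_add, smul_mul_assoc, mul_smul_comm, one_mul, mul_one]
  module

theorem angular_sq_add_sq {a b θ p : ℝ} (hp : p ≠ 0)
    (hpdef : p ^ 2 = a ^ 2 * Real.cos θ ^ 2 + b ^ 2 * Real.sin θ ^ 2) :
    (Real.sin θ * Real.cos θ * (a ^ 2 - b ^ 2) / p) ^ 2 + (a * b / p) ^ 2
      = a ^ 2 + b ^ 2 - p ^ 2 := by
  field_simp
  rw [hpdef]
  linear_combination (a ^ 2 * Real.cos θ ^ 2 + b ^ 2 * Real.sin θ ^ 2) * (a ^ 2 + b ^ 2)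
    * Real.sin_sq_add_cos_sq θ
    - a ^ 2 * b ^ 2 * (Real.sin θ ^ 2 + Real.cos θ ^ 2 + 1) * Real.sin_sq_add_cos_sq θ

theorem radial_sq_sub_sq {r rp M Δ cplus cminus : ℝ} (hr : r ≠ 0) (hrp : rp ≠ 0)
    (hcp : cplus = Δ / (2 * rp ^ 3) + 2 * M * r ^ 2 / rp ^ 3 + rp ^ 3 / (2 * r ^ 2))
    (hcm : cminus = Δ / (2 * rp ^ 3) + 2 * M * r ^ 2 / rp ^ 3 - rp ^ 3 / (2 * r ^ 2)) :
    cminus ^ 2 - cplus ^ 2 = -(Δ + 4 * M * r ^ 2) / r ^ 2 := by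
  subst hcp hcm
  field_simp
  ring

theorem quadratic_form_eq_neg_sigma_sub_two_mass {a b r θ M rp S p Δ cplus cminus s : ℝ}
    (hr : r ≠ 0) (hp : p ≠ 0) (hrp : rp ≠ 0)
    (hpdef : p ^ 2 = a ^ 2 * Real.cos θ ^ 2 + b ^ 2 * Real.sin θ ^ 2)
    (hS : S = r ^ 2 + p ^ 2) (hΔ : Δ = (r ^ 2 + a ^ 2) * (r ^ 2 + b ^ 2) - 2 * M * r ^ 2)
    (hcp : cplus = Δ / (2 * rp ^ 3) + 2 * M * r ^ 2 / rp ^ 3 + rp ^ 3 / (2 * r ^ 2))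
    (hcm : cminus = Δ / (2 * rp ^ 3) + 2 * M * r ^ 2 / rp ^ 3 - rp ^ 3 / (2 * r ^ 2))
    (hs : s = Real.sin θ * Real.cos θ * (a ^ 2 - b ^ 2) / p) :
    -cplus ^ 2 + cminus ^ 2 + s ^ 2 + (a * b / p) ^ 2 + (a * b / r) ^ 2 = -(S + 2 * M) := by
  have hmass : -(Δ + 4 * M * r ^ 2) / r ^ 2 + (a * b / r) ^ 2
      = -(r ^ 2 + a ^ 2 + b ^ 2 + 2 * M) := by
    rw [hΔ]
    field_simp
    ring
  rw [hS, hs]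
  linear_combination angular_sq_add_sq hp hpdef + radial_sq_sub_sq hr hrp hcp hcm + hmass

/-- The prefactor P = γ⁰c₊ + γ¹c₋ + γ³s + (γ⁵/p − i/r)ab of ∂_τ in the Dirac equation is
invertible, with P·(γ⁰c₊ + γ¹c₋ + γ³s + (γ⁵/p + i/r)ab) = −(Σ+2M)·I₄, for any gamma
matrices satisfying the Clifford relations {γ^A,γ^B} = 2η^{AB} with η = diag(−1,1,1,1,1).
(Index 4 of `Fin 5` stands for the gamma-matrix label 5.) -/
theorem stmt11 (γ : Fin 5 → Matrix (Fin 4) (Fin 4) ℂ)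
    (hcl : ∀ A B, γ A * γ B + γ B * γ A
      = (2 * if A = B then (if A = 0 then (-1:ℂ) else 1) else 0) • (1 : Matrix (Fin 4) (Fin 4) ℂ))
    (a b r θ M rp S p Δ cplus cminus s : ℝ)
    (hr : 0 < r) (hppos : 0 < p) (hrp : 0 < rp) (hM : 0 < M)
    (hpdef : p^2 = a^2*(Real.cos θ)^2 + b^2*(Real.sin θ)^2)
    (hS : S = r^2 + p^2)
    (hΔ : Δ = (r^2+a^2)*(r^2+b^2) - 2*M*r^2)
    (hcp : cplus = Δ/(2*rp^3) + 2*M*r^2/rp^3 + rp^3/(2*r^2))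
    (hcm : cminus = Δ/(2*rp^3) + 2*M*r^2/rp^3 - rp^3/(2*r^2))
    (hs : s = Real.sin θ * Real.cos θ * (a^2 - b^2)/p)
    (P Q : Matrix (Fin 4) (Fin 4) ℂ)
    (hP : P = ((cplus : ℝ) : ℂ) • γ 0 + ((cminus : ℝ) : ℂ) • γ 1 + ((s : ℝ) : ℂ) • γ 3
            + (((a*b/p : ℝ)) : ℂ) • γ 4
            + (-(Complex.I * ((a*b/r : ℝ) : ℂ))) • (1 : Matrix (Fin 4) (Fin 4) ℂ))
    (hQ : Q = ((cplus : ℝ) : ℂ) • γ 0 + ((cminus : ℝ) : ℂ) • γ 1 + ((s : ℝ) : ℂ) • γ 3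
            + (((a*b/p : ℝ)) : ℂ) • γ 4
            + (Complex.I * ((a*b/r : ℝ) : ℂ)) • (1 : Matrix (Fin 4) (Fin 4) ℂ)) :
    P * Q = ((-(S + 2*M) : ℝ) : ℂ) • (1 : Matrix (Fin 4) (Fin 4) ℂ) ∧
    IsUnit P ∧
    P * (((-(S + 2*M) : ℝ)⁻¹ : ℂ) • Q) = 1 := by
  set c : Fin 5 → ℂ := ![(cplus : ℂ), (cminus : ℂ), 0, (s : ℂ), ((a * b / p : ℝ) : ℂ)]
  set X := ∑ i, c i • γ i
  have hX : X = (cplus : ℂ) • γ 0 + (cminus : ℂ) • γ 1 + (s : ℂ) • γ 3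
      + ((a * b / p : ℝ) : ℂ) • γ 4 := by
    simp [X, c, Fin.sum_univ_five]
  have hXX : X * X = ((-cplus ^ 2 + cminus ^ 2 + s ^ 2 + (a * b / p) ^ 2 : ℝ) : ℂ) • 1 := by
    rw [sum_smul_mul_self_of_anticomm γ (fun A => if A = 0 then -1 else 1) c
      (fun A => mul_self_eq_smul_one_of_add_self (by simpa using hcl A A))
      (fun A B hAB => by simpa [hAB] using hcl A B)]
    simp [c, Fin.sum_univ_five]
  have hscalar := quadratic_form_eq_neg_sigma_sub_two_mass hr.ne' hppos.ne' hrp.ne' hpdef hS hΔ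
    hcp hcm hs
  have hPQ : P * Q = ((-(S + 2 * M) : ℝ) : ℂ) • (1 : Matrix (Fin 4) (Fin 4) ℂ) := by
    rw [hP, hQ, ← hX, neg_smul, ← sub_eq_add_neg, sub_smul_one_mul_add_smul_one, hXX,
      ← hscalar, ← sub_smul]
    congr 1
    push_cast
    linear_combination -((a : ℂ) * b / r) ^ 2 * Complex.I_sq
  have hk : ((-(S + 2 * M) : ℝ) : ℂ) ≠ 0 := by
    have : 0 < S := by rw [hS]; positivity
    exact_mod_cast (by linarith : -(S + 2 * M) ≠ 0)
  have hinv : P * (((-(S + 2 * M) : ℝ)⁻¹ : ℂ) • Q) = 1 := by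
    rw [mul_smul_comm, hPQ, smul_smul, inv_mul_cancel₀ hk, one_smul]
  exact ⟨hPQ, IsUnit.of_mul_eq_one _ hinv, hinv⟩
end

section
/- Let K = ∂_τ + α∂_φ + β∂_ξ and p(α,β) = g_ττ + 2αg_τφ + 2βg_τξ + 2αβg_φξ + α²g_φφ + β²g_ξξ be the associated quadratic form of the 5D Myers-Perry metric in Eddington–Finkelstein-type coordinates at radius r = r₀ with 0 < r₀ < ρ₋. Then there exist real numbers α, β such that p(α,β) < 0, i.e. K is timelike at the inner boundary. In particular, the discriminant in α of the discriminant in β of p equals (64Δcos⁶θsin²θ/Σ)·((r²+b²)(r²sec²θ + a² + b²tan²θ) + μb²), which is strictly positive when Δ(r₀) > 0 and 0 < θ < π/2. -/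
/-!
The vector corotating with the angular velocities `Ωₐ = a/(r²+a²)`, `Ω_b = b/(r²+b²)` has
`g(K, K) = -Δ r² Σ / ((r²+a²)(r²+b²))²`, which is negative as soon as `Δ > 0`.
The iterated discriminant of a ternary quadratic form is `-64 g_ξξ` times its Gram determinant,
and the Gram determinant of the `(τ, φ, ξ)` block is `-Δ sin²θ cos²θ`; since
`r² sec²θ + a² + b² tan²θ = Σ sec²θ`, the claimed closed form is `64 Δ sin²θ cos²θ g_ξξ`,
and `g_ξξ > 0`.
-/

open Real

/-- The discriminant in `β` of `t + 2αf + 2βx + 2αβ fx + α² ff + β² xx` is the quadratic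
`(4fx² - 4xx ff) α² + (8x fx - 8xx f) α + (4x² - 4xx t)` in `α`. -/
theorem discrim_discrim_eq_neg_mul_det {R : Type*} [CommRing R] (t f x ff xx fx : R) :
    discrim (4*fx^2 - 4*xx*ff) (8*x*fx - 8*xx*f) (4*x^2 - 4*xx*t) =
      -64 * xx * !![t, f, x; f, ff, fx; x, fx, xx].det := by
  rw [discrim, Matrix.det_fin_three]
  simp only [Matrix.of_apply, Matrix.cons_val', Matrix.cons_val_zero, Matrix.cons_val_fin_one,
    Matrix.cons_val_one, Matrix.cons_val]
  ring

section MyersPerry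

variable {a b μ r s c S : ℝ}

-- `s` and `c` stand for `sin²θ` and `cos²θ`.

theorem myersPerry_gram_det (hsc : s + c = 1) (hS : S = r^2 + a^2*c + b^2*s) (hS0 : S ≠ 0) :
    !![-1 + μ/S, -a*μ*s/S, -b*μ*c/S;
      -a*μ*s/S, (r^2+a^2)*s + a^2*s^2*μ/S, a*b*s*c*μ/S;
      -b*μ*c/S, a*b*s*c*μ/S, (r^2+b^2)*c + b^2*c^2*μ/S].det =
      -((r^2+a^2)*(r^2+b^2) - μ*r^2) * s * c := by
  rw [Matrix.det_fin_three]
  simp only [Matrix.of_apply, Matrix.cons_val', Matrix.cons_val_zero, Matrix.cons_val_fin_one,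
    Matrix.cons_val_one, Matrix.cons_val]
  obtain rfl : s = 1 - c := by linarith
  field_simp
  rw [hS]
  ring

theorem myersPerry_corotating_norm (hsc : s + c = 1) (hS : S = r^2 + a^2*c + b^2*s)
    (hS0 : S ≠ 0) (ha : r^2 + a^2 ≠ 0) (hb : r^2 + b^2 ≠ 0) :
    (-1 + μ/S) + 2*(a/(r^2+a^2))*(-a*μ*s/S) + 2*(b/(r^2+b^2))*(-b*μ*c/S)
      + 2*(a/(r^2+a^2))*(b/(r^2+b^2))*(a*b*s*c*μ/S)
      + (a/(r^2+a^2))^2*((r^2+a^2)*s + a^2*s^2*μ/S)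
      + (b/(r^2+b^2))^2*((r^2+b^2)*c + b^2*c^2*μ/S) =
      -(((r^2+a^2)*(r^2+b^2) - μ*r^2) * r^2 * S / ((r^2+a^2)*(r^2+b^2))^2) := by
  obtain rfl : s = 1 - c := by linarith
  field_simp
  rw [hS]
  ring

end MyersPerry

theorem div_cos_sq_add_mul_tan_sq {a b r θ : ℝ} (hc : cos θ ≠ 0) :
    r^2/cos θ^2 + a^2 + b^2*tan θ^2 = (r^2 + a^2*cos θ^2 + b^2*sin θ^2) / cos θ^2 := by
  rw [tan_eq_sin_div_cos]
  field_simp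

theorem stmt12_general (a b μ r θ S Δ : ℝ)
    (hμ : 0 < μ) (hr : 0 < r)
    (hθ1 : 0 < θ) (hθ2 : θ < Real.pi/2)
    (hS : S = r^2 + a^2*(Real.cos θ)^2 + b^2*(Real.sin θ)^2)
    (hΔdef : Δ = (r^2+a^2)*(r^2+b^2) - μ*r^2) (hΔ : 0 < Δ)
    (gττ gτφ gτξ gφφ gξξ gφξ : ℝ)
    (h1 : gττ = -1 + μ/S)
    (h2 : gτφ = -a*μ*(Real.sin θ)^2/S)
    (h3 : gτξ = -b*μ*(Real.cos θ)^2/S)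
    (h4 : gφφ = (r^2+a^2)*(Real.sin θ)^2 + a^2*(Real.sin θ)^4*μ/S)
    (h5 : gξξ = (r^2+b^2)*(Real.cos θ)^2 + b^2*(Real.cos θ)^4*μ/S)
    (h6 : gφξ = a*b*(Real.sin θ)^2*(Real.cos θ)^2*μ/S) :
    (∃ α β : ℝ,
      gττ + 2*α*gτφ + 2*β*gτξ + 2*α*β*gφξ + α^2*gφφ + β^2*gξξ < 0) ∧
    (8*gτξ*gφξ - 8*gξξ*gτφ)^2 - 4*(4*gφξ^2 - 4*gξξ*gφφ)*(4*gτξ^2 - 4*gξξ*gττ)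
      = 64*Δ*(Real.cos θ)^6*(Real.sin θ)^2/S *
          ((r^2+b^2)*(r^2/(Real.cos θ)^2 + a^2 + b^2*(Real.tan θ)^2) + μ*b^2) ∧
    0 < 64*Δ*(Real.cos θ)^6*(Real.sin θ)^2/S *
          ((r^2+b^2)*(r^2/(Real.cos θ)^2 + a^2 + b^2*(Real.tan θ)^2) + μ*b^2) := by
  have hc : 0 < cos θ := cos_pos_of_mem_Ioo ⟨by linarith [pi_pos], hθ2⟩
  have hs : 0 < sin θ := sin_pos_of_pos_of_lt_pi hθ1 (by linarith [pi_pos])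
  have hS0 : 0 < S := by rw [hS]; positivity
  have hsc : sin θ^2 + cos θ^2 = 1 := sin_sq_add_cos_sq θ
  have hξξ : 0 < gξξ := by rw [h5]; positivity
  have hclosed : 64*Δ*cos θ^6*sin θ^2/S *
      ((r^2+b^2)*(r^2/cos θ^2 + a^2 + b^2*tan θ^2) + μ*b^2) = 64*Δ*sin θ^2*cos θ^2*gξξ := by
    rw [div_cos_sq_add_mul_tan_sq hc.ne', ← hS, h5]
    field_simp
  rw [show sin θ^4 = (sin θ^2)^2 by ring] at h4
  rw [show cos θ^4 = (cos θ^2)^2 by ring] at h5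
  rw [hclosed]
  refine ⟨⟨a/(r^2+a^2), b/(r^2+b^2), ?_⟩, ?_, by positivity⟩
  · rw [h1, h2, h3, h4, h5, h6,
      myersPerry_corotating_norm hsc hS hS0.ne' (by positivity) (by positivity), ← hΔdef]
    exact neg_neg_of_pos (by positivity)
  · have hdet : !![gττ, gτφ, gτξ; gτφ, gφφ, gφξ; gτξ, gφξ, gξξ].det =
        -Δ * sin θ^2 * cos θ^2 := by
      rw [h1, h2, h3, h4, h5, h6, myersPerry_gram_det hsc hS hS0.ne', hΔdef]
    have hdisc := discrim_discrim_eq_neg_mul_det gττ gτφ gτξ gφφ gξξ gφξ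
    rw [discrim, hdet] at hdisc
    linear_combination hdisc

/-- There exist α, β such that K = ∂_τ + α∂_φ + β∂_ξ is timelike at the inner boundary
r = r₀ (where Δ(r₀) > 0), i.e. p(α,β) = g(K,K) < 0; moreover the discriminant in α of the
discriminant in β of p equals (64Δcos⁶θsin²θ/Σ)((r²+b²)(r²sec²θ + a² + b²tan²θ) + μb²),
which is strictly positive. -/
theorem stmt12 (a b μ r θ S Δ : ℝ)
    (hμ : 0 < μ) (hne : a^2 + b^2 + 2*|a*b| < μ) (hr : 0 < r)
    (hθ1 : 0 < θ) (hθ2 : θ < Real.pi/2)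
    (hS : S = r^2 + a^2*(Real.cos θ)^2 + b^2*(Real.sin θ)^2)
    (hΔdef : Δ = (r^2+a^2)*(r^2+b^2) - μ*r^2) (hΔ : 0 < Δ)
    (gττ gτφ gτξ gφφ gξξ gφξ : ℝ)
    (h1 : gττ = -1 + μ/S)
    (h2 : gτφ = -a*μ*(Real.sin θ)^2/S)
    (h3 : gτξ = -b*μ*(Real.cos θ)^2/S)
    (h4 : gφφ = (r^2+a^2)*(Real.sin θ)^2 + a^2*(Real.sin θ)^4*μ/S)
    (h5 : gξξ = (r^2+b^2)*(Real.cos θ)^2 + b^2*(Real.cos θ)^4*μ/S)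
    (h6 : gφξ = a*b*(Real.sin θ)^2*(Real.cos θ)^2*μ/S) :
    (∃ α β : ℝ,
      gττ + 2*α*gτφ + 2*β*gτξ + 2*α*β*gφξ + α^2*gφφ + β^2*gξξ < 0) ∧
    (8*gτξ*gφξ - 8*gξξ*gτφ)^2 - 4*(4*gφξ^2 - 4*gξξ*gφφ)*(4*gτξ^2 - 4*gξξ*gττ)
      = 64*Δ*(Real.cos θ)^6*(Real.sin θ)^2/S *
          ((r^2+b^2)*(r^2/(Real.cos θ)^2 + a^2 + b^2*(Real.tan θ)^2) + μ*b^2) ∧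
    0 < 64*Δ*(Real.cos θ)^6*(Real.sin θ)^2/S *
          ((r^2+b^2)*(r^2/(Real.cos θ)^2 + a^2 + b^2*(Real.tan θ)^2) + μ*b^2) :=
  stmt12_general a b μ r θ S Δ hμ hr hθ1 hθ2 hS hΔdef hΔ gττ gτφ gτξ gφφ gξξ gφξ h1 h2 h3 h4 h5 h6
end

section
/- The Killing vector ∂_τ fails to be timelike everywhere on the inner boundary r = r₀ < ρ₋: there is no r₀ with 0 < r₀² < ρ₋² such that μ − r₀² < a²cos²θ + b²sin²θ for all θ ∈ (0, π/2). Indeed at θ = π/4 the required inequality √((μ−a²−b²)²−4a²b²) < a²(cos²θ−½) + b²(sin²θ−½) − μ/2 reduces to a strictly negative right-hand side, a contradiction. -/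
/-- The Killing vector ∂_τ fails to be timelike everywhere on the inner boundary: there is
no r₀ with 0 < r₀² < ρ₋² such that μ − r₀² < a²cos²θ + b²sin²θ for all θ ∈ (0, π/2). -/
theorem stmt13 (a b μ : ℝ) (hμ : 0 < μ) (hne : a^2 + b^2 + 2*|a*b| < μ)
    (ρm : ℝ)
    (hρm : ρm^2 = ((μ - a^2 - b^2) - Real.sqrt ((μ - a^2 - b^2)^2 - 4*a^2*b^2))/2) :
    ¬ ∃ r₀ : ℝ, 0 < r₀^2 ∧ r₀^2 < ρm^2 ∧
      ∀ θ ∈ Set.Ioo 0 (Real.pi/2),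
        μ - r₀^2 < a^2*(Real.cos θ)^2 + b^2*(Real.sin θ)^2 := by
  rintro ⟨r₀, h0, h1, h2⟩
  have hπ := Real.pi_pos
  have hmem : Real.pi/4 ∈ Set.Ioo 0 (Real.pi/2) := by
    constructor <;> linarith
  have h := h2 _ hmem
  have hc : (Real.cos (Real.pi/4))^2 = 1/2 := by
    rw [Real.cos_pi_div_four]
    rw [div_pow, Real.sq_sqrt (by norm_num : (2:ℝ) ≥ 0)]
    norm_num
  have hs : (Real.sin (Real.pi/4))^2 = 1/2 := by
    rw [Real.sin_pi_div_four]
    rw [div_pow, Real.sq_sqrt (by norm_num : (2:ℝ) ≥ 0)]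
    norm_num
  rw [hc, hs] at h
  have hsq : 0 ≤ Real.sqrt ((μ - a^2 - b^2)^2 - 4*a^2*b^2) := Real.sqrt_nonneg _
  linarith
end

section
/- The matrix A = [[coshΘ, sinhΘ],[sinhΘ, coshΘ]] with Θ = ¼·log((ω+m)/(ω−m)) is invertible with det A = 1, and it diagonalizes the constant matrix M₀ = [[−iω, im],[−im, iω]]: A⁻¹M₀A = diag(−iΦ', iΦ') where Φ' = sgn(ω)√(ω²−m²). -/
/-!
Conjugating `M₀` by the hyperbolic rotation of rapidity `Θ` yields a matrix whose entries are
`±i (ω cosh 2Θ - m sinh 2Θ)` on the diagonal and `±i (m cosh 2Θ - ω sinh 2Θ)` off it.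
The choice of `Θ` makes `e^{4Θ} = (ω+m)/(ω-m)`, i.e. `tanh 2Θ = m/ω`, so the off-diagonal
entries vanish. The diagonal quantity `P = ω cosh 2Θ - m sinh 2Θ` then satisfies
`P² = ω² - m²` (the boost preserves `ω² - m²`) and `ω P = P² cosh 2Θ ≥ 0`, which fixes
`P = sgn(ω) √(ω² - m²)`.
-/

open Matrix Real

section HyperbolicRotation

variable {R : Type*} [CommRing R] {c s : R}

theorem inv_hyperbolicRotation (h : c ^ 2 - s ^ 2 = 1) :
    (!![c, s; s, c])⁻¹ = !![c, -s; -s, c] := by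
  refine Matrix.inv_eq_left_inv ?_
  rw [Matrix.mul_fin_two, Matrix.one_fin_two]
  simp only [EmbeddingLike.apply_eq_iff_eq, Matrix.vecCons_inj, and_true]
  refine ⟨⟨?_, by ring⟩, by ring, ?_⟩ <;> linear_combination h

theorem hyperbolicRotation_conj_eq_diagonal {a b d : R} (h : c ^ 2 - s ^ 2 = 1)
    (hdiag : a * (c ^ 2 + s ^ 2) - b * (2 * s * c) = d)
    (hoff : b * (c ^ 2 + s ^ 2) - a * (2 * s * c) = 0) :
    (!![c, s; s, c])⁻¹ * !![-a, b; -b, a] * !![c, s; s, c] = !![-d, 0; 0, d] := by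
  rw [inv_hyperbolicRotation h, Matrix.mul_fin_two, Matrix.mul_fin_two]
  simp only [EmbeddingLike.apply_eq_iff_eq, Matrix.vecCons_inj, and_true]
  refine ⟨⟨?_, ?_⟩, ?_, ?_⟩
  · linear_combination -hdiag
  · linear_combination hoff
  · linear_combination -hoff
  · linear_combination hdiag

end HyperbolicRotation

theorem mul_cosh_eq_mul_sinh_of_exp_mul {x ω m : ℝ} (h : exp (2 * x) * (ω - m) = ω + m) :
    m * cosh x = ω * sinh x := by
  have hinv : exp x * exp (-x) = 1 := by rw [← exp_add, add_neg_cancel, exp_zero]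
  rw [two_mul, exp_add] at h
  rw [cosh_eq, sinh_eq]
  linear_combination (-exp (-x) / 2) * h + (ω - m) * exp x / 2 * hinv

theorem mul_cosh_sub_mul_sinh_eq_sign_mul_sqrt {x ω m : ℝ} (h : m * cosh x = ω * sinh x) :
    ω * cosh x - m * sinh x = sign ω * √(ω ^ 2 - m ^ 2) := by
  set P := ω * cosh x - m * sinh x
  have hP : P ^ 2 = ω ^ 2 - m ^ 2 := by
    linear_combination (ω ^ 2 - m ^ 2) * cosh_sq x + (m * cosh x - ω * sinh x) * h
  have hωP : ω * P = P ^ 2 * cosh x := by linear_combination m * h - cosh x * hP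
  have hnonneg : 0 ≤ ω * P := hωP ▸ by positivity
  rw [← hP, sqrt_sq_eq_abs]
  rcases lt_trichotomy ω 0 with hω | rfl | hω
  · rw [sign_of_neg hω, abs_of_nonpos (nonpos_of_mul_nonneg_right hnonneg hω), neg_one_mul,
      neg_neg]
  · have hP0 : P ^ 2 = 0 :=
      (mul_eq_zero.1 (hωP.symm.trans (zero_mul P))).resolve_right (cosh_pos x).ne'
    rw [sign_zero, zero_mul, pow_eq_zero_iff two_ne_zero |>.1 hP0]
  · rw [sign_of_pos hω, abs_of_nonneg (nonneg_of_mul_nonneg_right hnonneg hω), one_mul]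

/-- The matrix A = [[coshΘ, sinhΘ],[sinhΘ, coshΘ]] with Θ = ¼log((ω+m)/(ω−m)) has
determinant 1, is invertible, and diagonalizes M₀ = [[−iω, im],[−im, iω]]:
A⁻¹M₀A = diag(−iΦ', iΦ') with Φ' = sgn(ω)√(ω²−m²). -/
theorem stmt16 (ω m : ℝ) (hm : 0 < m) (hω : m < |ω|)
    (Θ : ℝ) (hΘ : Θ = (1/4) * Real.log ((ω + m)/(ω - m)))
    (A M₀ : Matrix (Fin 2) (Fin 2) ℂ)
    (hA : A = !![((Real.cosh Θ : ℝ) : ℂ), ((Real.sinh Θ : ℝ) : ℂ);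
                 ((Real.sinh Θ : ℝ) : ℂ), ((Real.cosh Θ : ℝ) : ℂ)])
    (hM : M₀ = !![-(Complex.I * (ω : ℂ)), Complex.I * (m : ℂ);
                  -(Complex.I * (m : ℂ)), Complex.I * (ω : ℂ)])
    (Φ' : ℝ) (hΦ : Φ' = Real.sign ω * Real.sqrt (ω^2 - m^2)) :
    A.det = 1 ∧ IsUnit A ∧
    A⁻¹ * M₀ * A = !![-(Complex.I * (Φ' : ℂ)), 0; 0, Complex.I * (Φ' : ℂ)] := by
  have hratio : 0 < (ω + m) / (ω - m) := by
    have hsq : m ^ 2 < ω ^ 2 := sq_lt_sq.2 (by rwa [abs_of_pos hm])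
    exact div_pos_iff.2 (mul_pos_iff.1 (by nlinarith))
  have hexp : exp (2 * (2 * Θ)) * (ω - m) = ω + m := by
    rw [hΘ, show 2 * (2 * (1 / 4 * log ((ω + m) / (ω - m)))) = log ((ω + m) / (ω - m)) by ring,
      exp_log hratio, div_mul_cancel₀ _ (div_ne_zero_iff.1 hratio.ne').2]
  have hoff := mul_cosh_eq_mul_sinh_of_exp_mul hexp
  have hdiag := mul_cosh_sub_mul_sinh_eq_sign_mul_sqrt hoff
  rw [cosh_two_mul, sinh_two_mul] at hoff hdiag
  have hcs : ((cosh Θ : ℝ) : ℂ) ^ 2 - ((sinh Θ : ℝ) : ℂ) ^ 2 = 1 := by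
    exact_mod_cast cosh_sq_sub_sinh_sq Θ
  have hdet : A.det = 1 := by rw [hA, det_fin_two_of, ← hcs]; ring
  refine ⟨hdet, (isUnit_iff_isUnit_det A).2 (hdet ▸ isUnit_one), ?_⟩
  rw [hA, hM]
  refine hyperbolicRotation_conj_eq_diagonal hcs ?_ ?_
  · rw [hΦ, ← hdiag]
    push_cast
    ring
  · have hoffC := congrArg ((↑) : ℝ → ℂ) hoff
    push_cast at hoffC ⊢
    linear_combination Complex.I * hoffC
end
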